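/- arXiv:1101.3977 — 7 statements merged into one kernel-verified Lean document; each statement's English description precedes it below -/
import Mathlib

section
/- Let A be an Artinian local principal ideal ring with maximal ideal (t). Then the set of zero divisors of the polynomial ring A[x] equals the ideal generated by t in A[x]. -/
/-!
By McCoy's theorem a zero divisor of `A[X]` is killed by a nonzero constant, so its coefficients
are zero divisors of `A`, i.e. non-units, i.e. elements of `(t)`. Conversely, `A` is Artinian
local, so its maximal ideal is its nilradical: a polynomial with all coefficients in `(t)` is
nilpotent, hence a zero divisor.
-/

/-- `r` is a zero divisor. -/
def IsZD {R : Type*} [CommRing R] (r : R) : Prop := ∃ s : R, s ≠ 0 ∧ r * s = 0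

/-- `R` has only harmless zero divisors: every zero divisor is `1 - u` for a unit `u`. -/
def OnlyHarmlessZD (R : Type*) [CommRing R] : Prop :=
  ∀ r : R, IsZD r → ∃ u : Rˣ, r = 1 - (u : R)

/-- `r` is irreducible in the classical (Galovich) sense. -/
def Irr {R : Type*} [CommRing R] (r : R) : Prop :=
  ∀ a b : R, r = a * b → IsUnit a ∨ IsUnit b

/-- `r` is B-irreducible: `(r)` is maximal among proper principal ideals. -/
def Birr {R : Type*} [CommRing R] (r : R) : Prop :=
  Ideal.span ({r} : Set R) ≠ ⊤ ∧
    ∀ s : R, Ideal.span ({r} : Set R) ≤ Ideal.span ({s} : Set R) →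
      Ideal.span ({s} : Set R) = ⊤ ∨ Ideal.span ({s} : Set R) = Ideal.span ({r} : Set R)

/-- `r` is F-irreducible (Fletcher): `r = a * b` implies `a ∈ (r)` or `b ∈ (r)`. -/
def Firr {R : Type*} [CommRing R] (r : R) : Prop :=
  ¬ IsUnit r ∧
    ∀ a b : R, r = a * b → a ∈ Ideal.span ({r} : Set R) ∨ b ∈ Ideal.span ({r} : Set R)

open Polynomial IsLocalRing nonZeroDivisors

theorem isZD_iff_notMem_nonZeroDivisors {R : Type*} [CommRing R] {r : R} :
    IsZD r ↔ r ∉ R⁰ := by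
  simp only [notMem_nonZeroDivisors_iff_left, IsZD, Set.Nonempty, Set.mem_ofPred_eq, and_comm]

theorem IsNilpotent.isZD {R : Type*} [CommRing R] [Nontrivial R] {r : R} (hr : IsNilpotent r) :
    IsZD r := by
  obtain ⟨n, hn⟩ := hr
  exact isZD_iff_notMem_nonZeroDivisors.2 fun hmem ↦
    zero_notMem_nonZeroDivisors (hn ▸ pow_mem hmem n)

namespace Polynomial

variable {A : Type*} [CommRing A] [IsLocalRing A] {f : A[X]}

theorem coeff_mem_maximalIdeal_of_isZD (hf : IsZD f) (n : ℕ) : f.coeff n ∈ maximalIdeal A := by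
  have hf' : f ∉ A[X]⁰ := isZD_iff_notMem_nonZeroDivisors.1 hf
  obtain ⟨a, ha, haf⟩ := Polynomial.notMem_nonZeroDivisors_iff.1 hf'
  have hcoeff : a * f.coeff n = 0 := by
    rw [← smul_eq_mul, ← coeff_smul, haf, coeff_zero]
  by_contra hn
  exact ha ((notMem_maximalIdeal.1 hn).mul_left_eq_zero.1 hcoeff)

theorem isZD_iff_mem_map_C_maximalIdeal [Ring.KrullDimLE 0 A] :
    IsZD f ↔ f ∈ (maximalIdeal A).map C := by
  rw [Ideal.mem_map_C_iff]
  refine ⟨coeff_mem_maximalIdeal_of_isZD, fun hf ↦ ?_⟩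
  exact (Polynomial.isNilpotent_iff.2 fun n ↦
    Ring.KrullDimLE.isNilpotent_iff_mem_maximalIdeal.2 (hf n)).isZD

end Polynomial

theorem stmt_2_general (A : Type*) [CommRing A] [IsArtinianRing A] [IsLocalRing A]
    (t : A)
    (ht : Ideal.span ({t} : Set A) = IsLocalRing.maximalIdeal A) :
    ∀ f : Polynomial A,
      IsZD f ↔ f ∈ Ideal.span ({Polynomial.C t} : Set (Polynomial A)) := by
  intro f
  rw [← Set.image_singleton, ← Ideal.map_span, ht]
  exact isZD_iff_mem_map_C_maximalIdeal

theorem stmt_2 (A : Type*) [CommRing A] [IsArtinianRing A] [IsLocalRing A]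
    [IsPrincipalIdealRing A] (t : A)
    (ht : Ideal.span ({t} : Set A) = IsLocalRing.maximalIdeal A) :
    ∀ f : Polynomial A,
      IsZD f ↔ f ∈ Ideal.span ({Polynomial.C t} : Set (Polynomial A)) :=
  stmt_2_general A t ht
end

section
/- Let A be an Artinian local principal ideal ring. Then the polynomial ring A[x] is a ring with only harmless zero divisors. -/
/-!
Over a zero-dimensional (e.g. Artinian) local ring every nonunit is nilpotent, so every zero divisor is.
By McCoy's theorem a zero divisor `f` of `A[X]` is killed by a nonzero constant `a`, so all
coefficients of `f` are zero divisors of `A`, hence nilpotent, and `f` is nilpotent.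
Finally `f = 1 - (1 - f)` with `1 - f` a unit.
-/

open Polynomial
open scoped nonZeroDivisors

section

variable {R : Type*} [CommRing R]

theorem IsZD.notMem_nonZeroDivisors {r : R} (hr : IsZD r) : r ∉ R⁰ := by
  obtain ⟨s, hs, hrs⟩ := hr
  exact fun h => hs (mul_left_mem_nonZeroDivisors_eq_zero_iff h |>.mp hrs)

theorem IsZD.not_isUnit {r : R} (hr : IsZD r) : ¬IsUnit r := by
  obtain ⟨s, hs, hrs⟩ := hr
  exact fun hu => hs ((hu.mul_right_eq_zero).mp hrs)

theorem onlyHarmlessZD_of_isNilpotent (h : ∀ r : R, IsZD r → IsNilpotent r) :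
    OnlyHarmlessZD R := fun r hr => by
  obtain ⟨u, hu⟩ := (h r hr).isUnit_one_sub
  exact ⟨u, by rw [hu, sub_sub_cancel]⟩

theorem Ring.KrullDimLE.isNilpotent_of_isZD [Ring.KrullDimLE 0 R] [IsLocalRing R] {r : R}
    (hr : IsZD r) : IsNilpotent r :=
  Ring.KrullDimLE.isNilpotent_iff_mem_nonunits.mpr hr.not_isUnit

theorem Polynomial.isNilpotent_of_isZD (h : ∀ a : R, IsZD a → IsNilpotent a) {f : R[X]}
    (hf : IsZD f) : IsNilpotent f := by
  obtain ⟨a, ha, haf⟩ := notMem_nonZeroDivisors_iff.mp hf.notMem_nonZeroDivisors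
  refine Polynomial.isNilpotent_iff.mpr fun i => h _ ⟨a, ha, ?_⟩
  rw [mul_comm, ← smul_eq_mul, ← coeff_smul, haf, coeff_zero]

end

theorem stmt_3_general (A : Type*) [CommRing A] [IsArtinianRing A] [IsLocalRing A] :
    OnlyHarmlessZD (Polynomial A) :=
  onlyHarmlessZD_of_isNilpotent fun _ =>
    Polynomial.isNilpotent_of_isZD fun _ => Ring.KrullDimLE.isNilpotent_of_isZD

theorem stmt_3 (A : Type*) [CommRing A] [IsArtinianRing A] [IsLocalRing A]
    [IsPrincipalIdealRing A] : OnlyHarmlessZD (Polynomial A) :=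
  stmt_3_general A
end

section
/- Let R be a ring with only harmless zero divisors. Then every B-irreducible element of R is irreducible. -/
namespace OnlyHarmlessZD

variable {R : Type*} [CommRing R]

theorem isUnit_of_mul_eq_self (hR : OnlyHarmlessZD R) {r x : R} (hr : r ≠ 0)
    (hx : r * x = r) : IsUnit x := by
  have hzd : IsZD (1 - x) := ⟨r, hr, by linear_combination -hx⟩
  obtain ⟨u, hu⟩ := hR (1 - x) hzd
  have hxu : x = u := by linear_combination -hu
  exact hxu ▸ u.isUnit

theorem isUnit_right_of_dvd_left (hR : OnlyHarmlessZD R) {r a b : R} (hr : r ≠ 0)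
    (hab : r = a * b) (hra : r ∣ a) : IsUnit b := by
  obtain ⟨c, rfl⟩ := hra
  have hcb : IsUnit (c * b) := hR.isUnit_of_mul_eq_self hr (by rw [← mul_assoc, ← hab])
  exact isUnit_of_mul_isUnit_right hcb

end OnlyHarmlessZD

theorem Birr.isUnit_or_span_eq {R : Type*} [CommRing R] {r a b : R} (h : Birr r)
    (hab : r = a * b) : IsUnit a ∨ Ideal.span ({a} : Set R) = Ideal.span ({r} : Set R) := by
  have hle : Ideal.span ({r} : Set R) ≤ Ideal.span ({a} : Set R) :=
    Ideal.span_singleton_le_span_singleton.mpr ⟨b, hab⟩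
  rw [← Ideal.span_singleton_eq_top]
  exact h.2 a hle

theorem stmt_7_general (R : Type*) [CommRing R] (hR : OnlyHarmlessZD R) (r : R)
    (h0 : r ≠ 0) (h : Birr r) : Irr r := by
  intro a b hab
  refine (h.isUnit_or_span_eq hab).imp id fun hspan => ?_
  exact hR.isUnit_right_of_dvd_left h0 hab (Ideal.span_singleton_le_span_singleton.mp hspan.le)

theorem stmt_7 (R : Type*) [CommRing R] (hR : OnlyHarmlessZD R) (r : R)
    (h0 : r ≠ 0) (hu : ¬ IsUnit r) (h : Birr r) : Irr r :=
  stmt_7_general R hR r h0 h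
end

section
/- For a non-unit r in a commutative ring with unity R, the following are equivalent: (1) r is F-irreducible, i.e., every factorization of r into finitely many factors admits a refinement containing r as one of the factors; (2) whenever r = ab, either a ∈ (r) or b ∈ (r); (3) whenever r = ab, either (r) = (a) or (r) = (b). -/
/-- `r` is F-irreducible in terms of refinements of factorizations: every factorization
`r = l.prod` (into finitely many factors) has a refinement (each factor of `l` is further
factored into a list of factors) containing `r` as one of the new factors. -/
def FirrRefine {R : Type*} [CommRing R] (r : R) : Prop :=
  ∀ l : List R, l.prod = r →
    ∃ L : List (List R), List.Forall₂ (fun m (a : R) => m.prod = a) L l ∧ r ∈ L.flatten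



/-!
If `r = a₁ ⋯ aₙ` and `r` divides no `aᵢ`, then F-irreducibility applied to `r = aᵢ · ∏_{j ≠ i} aⱼ`
gives `r = r · aᵢ sᵢ` for every `i`, and multiplying these yields `r = r² m`. Then `e = r m` is an
idempotent with `r ∣ u ↔ (1 - e) u = 0`, and F-irreducibility says exactly that the corner
ring `(1 - e) R` is a domain, i.e. that `(r)` is a prime ideal; so `r` divides some `aᵢ` after all.
-/

theorem eq_mul_prod_map_of_forall_eq_mul {ι M : Type*} [Monoid M] {r : M} {g : ι → M} :
    ∀ {l : List ι}, (∀ i ∈ l, r = r * g i) → r = r * (l.map g).prod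
  | [], _ => by simp
  | i :: l, h => by
    rw [List.map_cons, List.prod_cons, ← mul_assoc, ← h i List.mem_cons_self,
      ← eq_mul_prod_map_of_forall_eq_mul fun j hj => h j (List.mem_cons_of_mem i hj)]

theorem Ideal.span_singleton_eq_iff_mem_of_eq_mul {R : Type*} [CommSemiring R] {r a b : R}
    (hab : r = a * b) : Ideal.span {r} = Ideal.span {a} ↔ a ∈ Ideal.span {r} :=
  ⟨fun h => h ▸ Ideal.mem_span_singleton_self a, fun h =>
    le_antisymm (Ideal.span_singleton_le_span_singleton.2 ⟨b, hab⟩)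
      ((Ideal.span_singleton_le_iff_mem _).2 h)⟩

theorem List.forall₂_prod_eq_iff {M : Type*} [Monoid M] {L : List (List M)} {l : List M} :
    List.Forall₂ (fun m a => m.prod = a) L l ↔ L.map List.prod = l := by
  rw [← List.forall₂_eq_eq_eq, List.forall₂_map_left_iff]

section
variable {R : Type*} [CommRing R] {r : R}

theorem firrRefine_iff_forall_exists_dvd :
    FirrRefine r ↔ ∀ l : List R, l.prod = r → ∃ a ∈ l, r ∣ a := by
  simp only [FirrRefine, List.forall₂_prod_eq_iff]
  refine forall₂_congr fun l _ => ⟨?_, ?_⟩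
  · rintro ⟨L, rfl, hrL⟩
    obtain ⟨m, hm, hrm⟩ := List.mem_flatten.1 hrL
    exact ⟨m.prod, List.mem_map_of_mem hm, List.dvd_prod hrm⟩
  · rintro ⟨a, ha, c, rfl⟩
    classical
    refine ⟨l.map fun x => if x = r * c then [r, c] else [x], ?_, ?_⟩
    · rw [List.map_map]
      exact (List.map_congr_left (g := id) fun x _ => by
        by_cases hx : x = r * c <;> simp [hx]).trans (List.map_id l)
    · exact List.mem_flatten.2 ⟨[r, c], List.mem_map.2 ⟨r * c, ha, if_pos rfl⟩, by simp⟩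

namespace Firr

theorem dvd_or_dvd (h : Firr r) {a b : R} (hab : r = a * b) : r ∣ a ∨ r ∣ b := by
  simpa only [Ideal.mem_span_singleton] using h.2 a b hab

theorem isPrime_span_singleton (h : Firr r) {m : R} (hm : r = r * r * m) :
    (Ideal.span {r}).IsPrime := by
  refine ⟨by rw [Ne, Ideal.span_singleton_eq_top]; exact h.1, fun {u v} huv => ?_⟩
  simp only [Ideal.mem_span_singleton] at huv ⊢
  obtain ⟨w, hw⟩ := huv
  -- split along the idempotent `r * m`: `r = r * m * r` there, and `0 = u * v` on the complement
  have hfactor : r = (r * m + (1 - r * m) * u) * (r + (1 - r * m) * v) := by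
    linear_combination (1 - m * v - u - w + m * u * v) * hm - (1 - r * m) * hw
  rcases h.dvd_or_dvd hfactor with ⟨z, hz⟩ | ⟨z, hz⟩
  · exact Or.inl ⟨m * u + z - m, by linear_combination hz⟩
  · exact Or.inr ⟨m * v + z - 1, by linear_combination hz⟩

theorem exists_eq_mul_self_mul (h : Firr r) {l : List R} (hl : l.prod = r)
    (hndvd : ∀ a ∈ l, ¬ r ∣ a) : ∃ m, r = r * r * m := by
  classical
  have hcofactor : ∀ a ∈ l, ∃ s, r = r * (a * s) := by
    intro a ha
    have hra : r = a * (l.erase a).prod := by rw [List.prod_erase ha, hl]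
    obtain ⟨s, hs⟩ := (h.dvd_or_dvd hra).resolve_left (hndvd a ha)
    exact ⟨s, by rw [← mul_assoc, mul_comm r a, mul_assoc, ← hs, ← hra]⟩
  choose! s hs using hcofactor
  refine ⟨(l.map s).prod, ?_⟩
  have := eq_mul_prod_map_of_forall_eq_mul hs
  rwa [List.prod_map_mul, List.map_id', hl, ← mul_assoc] at this

theorem exists_dvd_of_prod_eq (h : Firr r) {l : List R} (hl : l.prod = r) : ∃ a ∈ l, r ∣ a := by
  by_contra! hndvd
  obtain ⟨m, hm⟩ := h.exists_eq_mul_self_mul hl hndvd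
  obtain ⟨a, ha, hra⟩ := ((h.isPrime_span_singleton hm).multiset_prod_mem_iff_exists_mem l).1
    (by rw [Multiset.prod_coe, hl]; exact Ideal.mem_span_singleton_self r)
  exact hndvd a ha (Ideal.mem_span_singleton.1 hra)

end Firr

end

theorem stmt_8 (R : Type*) [CommRing R] (r : R) (hu : ¬ IsUnit r) :
    (FirrRefine r ↔
      ∀ a b : R, r = a * b →
        a ∈ Ideal.span ({r} : Set R) ∨ b ∈ Ideal.span ({r} : Set R)) ∧
    ((∀ a b : R, r = a * b →
        a ∈ Ideal.span ({r} : Set R) ∨ b ∈ Ideal.span ({r} : Set R)) ↔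
      ∀ a b : R, r = a * b →
        Ideal.span ({r} : Set R) = Ideal.span ({a} : Set R) ∨
          Ideal.span ({r} : Set R) = Ideal.span ({b} : Set R)) := by
  refine ⟨⟨fun h a b hab => ?_, fun h => ?_⟩, forall₃_congr fun a b hab => ?_⟩
  · obtain ⟨c, hc, hrc⟩ := firrRefine_iff_forall_exists_dvd.1 h [a, b] (by simp [hab])
    rcases List.mem_pair.1 hc with rfl | rfl
    · exact Or.inl (Ideal.mem_span_singleton.2 hrc)
    · exact Or.inr (Ideal.mem_span_singleton.2 hrc)
  · exact firrRefine_iff_forall_exists_dvd.2 fun l hl => Firr.exists_dvd_of_prod_eq ⟨hu, h⟩ hl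
  · exact or_congr (Ideal.span_singleton_eq_iff_mem_of_eq_mul hab).symm
      (Ideal.span_singleton_eq_iff_mem_of_eq_mul (hab.trans (mul_comm a b))).symm
end

section
/- Let R be a commutative ring with unity. Every B-irreducible element of R is F-irreducible. -/
namespace Birr

variable {R : Type*} [CommRing R] {r : R}

theorem not_isUnit (h : Birr r) : ¬IsUnit r :=
  fun hr => h.1 (Ideal.span_singleton_eq_top.2 hr)

theorem span_singleton_eq_of_dvd (h : Birr r) {a : R} (ha : a ∣ r) (hna : ¬IsUnit a) :
    Ideal.span ({a} : Set R) = Ideal.span {r} :=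
  (h.2 a (Ideal.span_singleton_le_span_singleton.2 ha)).resolve_left
    (mt Ideal.span_singleton_eq_top.1 hna)

theorem firr (h : Birr r) : Firr r := by
  refine ⟨h.not_isUnit, fun a b hab => ?_⟩
  by_cases ha : IsUnit a
  · right
    rw [hab, Ideal.span_singleton_mul_left_unit ha]
    exact Ideal.mem_span_singleton_self b
  · left
    rw [← h.span_singleton_eq_of_dvd ⟨b, hab⟩ ha]
    exact Ideal.mem_span_singleton_self a

end Birr

theorem stmt_9_general (R : Type*) [CommRing R] (r : R)
    (h : Birr r) : Firr r :=
  h.firr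

theorem stmt_9 (R : Type*) [CommRing R] (r : R) (h0 : r ≠ 0) (hu : ¬ IsUnit r)
    (h : Birr r) : Firr r :=
  stmt_9_general R r h
end

section
/- Let R be a ring with only harmless zero divisors and let r ∈ R be a nonzero F-irreducible element. Then r is B-irreducible. -/
theorem OnlyHarmlessZD.isUnit_of_mul_eq_self_s10 {R : Type*} [CommRing R] (hR : OnlyHarmlessZD R)
    {r x : R} (h0 : r ≠ 0) (h : r * x = r) : IsUnit x := by
  by_cases hx : 1 - x = 0
  · rw [← sub_eq_zero.mp hx]
    exact isUnit_one
  · obtain ⟨u, hu⟩ := hR (1 - x) ⟨r, h0, by linear_combination -h⟩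
    rw [sub_right_inj.mp hu]
    exact u.isUnit

theorem stmt_10 (R : Type*) [CommRing R] (hR : OnlyHarmlessZD R) (r : R)
    (h0 : r ≠ 0) (h : Firr r) : Birr r := by
  obtain ⟨hnu, hfac⟩ := h
  refine ⟨Ideal.span_singleton_ne_top hnu, fun s hle => ?_⟩
  obtain ⟨b, hb⟩ := Ideal.span_singleton_le_span_singleton.mp hle
  rcases hfac s b hb with hs | hb_mem
  · exact .inr (le_antisymm (Ideal.span_singleton_le_iff_mem _ |>.mpr hs) hle)
  · obtain ⟨c, rfl⟩ := Ideal.mem_span_singleton'.mp hb_mem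
    have hfix : r * (s * c) = r := by linear_combination -hb
    exact .inl (Ideal.span_singleton_eq_top.mpr
      (isUnit_of_mul_isUnit_left (hR.isUnit_of_mul_eq_self_s10 h0 hfix)))
end

section
/- In a ring R with only harmless zero divisors, for a nonzero non-unit element r, the three conditions are equivalent: r is irreducible, r is B-irreducible, and r is F-irreducible. -/
/-!
Irreducible ⟹ B-irreducible ⟹ F-irreducible holds in every commutative ring. For the way back,
let `r` be F-irreducible and `r = a * b`, say with `r ∣ a`, so `a = r * d`. Then `r * (1 - d * b) = 0`, so `1 - d * b` is a
zero divisor or zero; either way `d * b` is a unit, hence so is `b`, and `r` is irreducible.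
-/

section

variable {R : Type*} [CommRing R] {r : R}

theorem OnlyHarmlessZD.isUnit_right_of_dvd_left_s11 (hR : OnlyHarmlessZD R) (h0 : r ≠ 0)
    {a b : R} (hab : r = a * b) (hra : r ∣ a) : IsUnit b := by
  obtain ⟨d, rfl⟩ := hra
  have hzero : (1 - d * b) * r = 0 := by linear_combination hab
  suffices IsUnit (d * b) from isUnit_of_mul_isUnit_right this
  by_cases h1 : 1 - d * b = 0
  · rw [← sub_eq_zero.mp h1]
    exact isUnit_one
  · obtain ⟨u, hu⟩ := hR _ ⟨r, h0, hzero⟩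
    rw [sub_right_inj.mp hu]
    exact u.isUnit

theorem birr_iff_dvd : Birr r ↔ ¬IsUnit r ∧ ∀ a b : R, r = a * b → IsUnit a ∨ r ∣ a := by
  simp only [Birr, ne_eq, Ideal.span_singleton_eq_top, Ideal.span_singleton_le_span_singleton]
  refine and_congr_right fun _ => ⟨fun h a b hab => ?_, fun h s ⟨c, hc⟩ => ?_⟩
  · refine (h a ⟨b, hab⟩).imp_right fun hspan => ?_
    rw [← Ideal.mem_span_singleton, ← hspan]
    exact Ideal.mem_span_singleton_self a
  · refine (h s c hc).imp_right fun hrs => ?_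
    exact le_antisymm (Ideal.span_singleton_le_span_singleton.mpr hrs)
      (Ideal.span_singleton_le_span_singleton.mpr ⟨c, hc⟩)

theorem firr_iff_dvd : Firr r ↔ ¬IsUnit r ∧ ∀ a b : R, r = a * b → r ∣ a ∨ r ∣ b := by
  simp only [Firr, Ideal.mem_span_singleton]

theorem Irr.birr (hu : ¬IsUnit r) (h : Irr r) : Birr r :=
  birr_iff_dvd.mpr ⟨hu, fun a b hab => (h a b hab).imp_right fun hb =>
    hab ▸ (hb.mul_right_dvd).mpr dvd_rfl⟩

theorem Birr.firr_s11 (h : Birr r) : Firr r :=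
  let ⟨hu, h⟩ := birr_iff_dvd.mp h
  firr_iff_dvd.mpr ⟨hu, fun a b hab => (h a b hab).elim
    (fun ha => Or.inr (hab ▸ (ha.mul_left_dvd).mpr dvd_rfl)) Or.inl⟩

theorem Firr.irr (hR : OnlyHarmlessZD R) (h0 : r ≠ 0) (h : Firr r) : Irr r := by
  intro a b hab
  rcases (firr_iff_dvd.mp h).2 a b hab with hra | hrb
  · exact Or.inr (hR.isUnit_right_of_dvd_left_s11 h0 hab hra)
  · exact Or.inl (hR.isUnit_right_of_dvd_left_s11 h0 (hab.trans (mul_comm a b)) hrb)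

end

theorem stmt_11 (R : Type*) [CommRing R] (hR : OnlyHarmlessZD R) (r : R)
    (h0 : r ≠ 0) (hu : ¬ IsUnit r) :
    (Irr r ↔ Birr r) ∧ (Birr r ↔ Firr r) :=
  ⟨⟨Irr.birr hu, fun h => h.firr_s11.irr hR h0⟩, ⟨Birr.firr_s11, fun h => (h.irr hR h0).birr hu⟩⟩
end
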